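/- arXiv:2105.14121 — 3 statements merged into one kernel-verified Lean document; each statement's English description precedes it below -/
import Mathlib

section
/- Let F : V → V be injective. Then the class I = {y | ∃ x, y = F(x) ∧ F(x) ∉ x} admits a productive choice via F: for every set s ⊆ I, F(s) ∈ I and F(s) ∉ s. Consequently I is a proper class. -/
/-!
If every member of `s` has the form `F x` with `F x ∉ x`, then `F s ∈ s` would give `F s = F x`
with `F x ∉ x`, hence `s = x` by injectivity and `F s ∉ s`. So `F` is a productive choice on the
class `I = {F x | F x ∉ x}`, and a set `r` with exactly the members of `I` would satisfy
`F r ∈ I` and `F r ∉ r`, contradicting `r = I`.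
-/

namespace ProductiveChoice

variable {V : Type*}

def IsProductive (mem : V → V → Prop) (I : V → Prop) (G : V → V) : Prop :=
  ∀ s : V, (∀ y, mem y s → I y) → I (G s) ∧ ¬ mem (G s) s

def IsProper (mem : V → V → Prop) (I : V → Prop) : Prop :=
  ¬ ∃ r : V, ∀ y, mem y r ↔ I y

theorem IsProductive.isProper {mem : V → V → Prop} {I : V → Prop} {G : V → V}
    (hG : IsProductive mem I G) : IsProper mem I := by
  rintro ⟨r, hr⟩
  obtain ⟨hIr, hnr⟩ := hG r fun y => (hr y).mp
  exact hnr ((hr (G r)).mpr hIr)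

theorem isProductive_of_injective (mem : V → V → Prop) {F : V → V}
    (hF : Function.Injective F) :
    IsProductive mem (fun y => ∃ x, y = F x ∧ ¬ mem (F x) x) F := by
  intro s hs
  have hns : ¬ mem (F s) s := fun h => by
    obtain ⟨x, hsx, hnx⟩ := hs _ h
    exact hnx (hF hsx ▸ h)
  exact ⟨⟨s, rfl, hns⟩, hns⟩

end ProductiveChoice

theorem injective_productive_class {V : Type*} (mem : V → V → Prop)
    (F : V → V) (hF : Function.Injective F) :
    (∀ s : V, (∀ y, mem y s → ∃ x, y = F x ∧ ¬ mem (F x) x) →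
      (∃ x, F s = F x ∧ ¬ mem (F x) x) ∧ ¬ mem (F s) s) ∧
    ¬ ∃ r : V, ∀ y, mem y r ↔ ∃ x, y = F x ∧ ¬ mem (F x) x :=
  have hI := ProductiveChoice.isProductive_of_injective mem hF
  ⟨hI, hI.isProper⟩
end

section
/- A function F : V → V is productive on some class if and only if it is productive on its least fixed point I(F) = {x | ∀ C, (∀ s ⊆ C, F(s) ∈ C) → x ∈ C}. -/
/-!
A class on which `F` is productive is closed under `F`, so it contains `I(F)`. Since `I(F)` is
itself closed under `F`, productivity passes down to it: `F(s) ∉ s` for `s ⊆ I(F)` is inherited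
from the larger class.
-/

namespace ClassTheory

variable {V : Type*} (mem : V → V → Prop) (F : V → V)

/-- `s ⊆ C`, reading `mem x s` as `x ∈ s` and a class as a predicate on `V`. -/
def SubsetOf (s : V) (C : V → Prop) : Prop := ∀ x, mem x s → C x

def ClosedUnder (C : V → Prop) : Prop := ∀ s, SubsetOf mem s C → C (F s)

def ProductiveOn (C : V → Prop) : Prop := ∀ s, SubsetOf mem s C → C (F s) ∧ ¬ mem (F s) s

/-- The intersection `I(F)` of all classes closed under `F`. -/
def lfp (x : V) : Prop := ∀ C, ClosedUnder mem F C → C x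

variable {mem F}

theorem lfp_le_of_closedUnder {C : V → Prop} (hC : ClosedUnder mem F C) {x : V}
    (hx : lfp mem F x) : C x :=
  hx C hC

theorem closedUnder_lfp : ClosedUnder mem F (lfp mem F) :=
  fun s hs _ hC => hC s fun x hx => hs x hx _ hC

theorem ProductiveOn.closedUnder {C : V → Prop} (hC : ProductiveOn mem F C) :
    ClosedUnder mem F C :=
  fun s hs => (hC s hs).1

theorem ProductiveOn.mono {C D : V → Prop} (hC : ProductiveOn mem F C)
    (hD : ClosedUnder mem F D) (hDC : ∀ x, D x → C x) : ProductiveOn mem F D :=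
  fun s hs => ⟨hD s hs, (hC s fun x hx => hDC x (hs x hx)).2⟩

theorem ProductiveOn.lfp {C : V → Prop} (hC : ProductiveOn mem F C) :
    ProductiveOn mem F (lfp mem F) :=
  hC.mono closedUnder_lfp fun _ => lfp_le_of_closedUnder hC.closedUnder

end ClassTheory

theorem productive_iff_productive_on_lfp {V : Type*} (mem : V → V → Prop)
    (F : V → V) :
    (∃ C : V → Prop, ∀ s : V, (∀ x, mem x s → C x) → C (F s) ∧ ¬ mem (F s) s) ↔
    (∀ s : V, (∀ x, mem x s →
        (∀ C : V → Prop, (∀ t, (∀ y, mem y t → C y) → C (F t)) → C x)) →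
      (∀ C : V → Prop, (∀ t, (∀ y, mem y t → C y) → C (F t)) → C (F s)) ∧
        ¬ mem (F s) s) :=
  show (∃ C, ClassTheory.ProductiveOn mem F C) ↔
      ClassTheory.ProductiveOn mem F (ClassTheory.lfp mem F) from
    ⟨fun ⟨_, hC⟩ => hC.lfp, fun h => ⟨_, h⟩⟩
end

section
/- If F : V → V is injective, then the least fixed point I(F) of F is a proper class: no set has exactly the members of I(F). -/
/-!
Call `F` productive on a class `A` if for every set `s ⊆ A` we have `F s ∈ A` and `F s ∉ s`;
such a class is never a set `r`, since `r ⊆ r` would give both `F r ∈ r` and `F r ∉ r`.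
For injective `F` the class of all `F a` with `F a ∉ a` is productive, and the least fixed
point `I(F)` is contained in it, so `I(F)` is productive as well.
-/

namespace Productive

variable {V : Type*} (mem : V → V → Prop) (F : V → V)

def LeastFixedPoint (x : V) : Prop :=
  ∀ C : V → Prop, (∀ s, (∀ y, mem y s → C y) → C (F s)) → C x

def IsProductive (A : V → Prop) : Prop :=
  ∀ s, (∀ y, mem y s → A y) → A (F s) ∧ ¬ mem (F s) s

def diagonal (x : V) : Prop :=
  ∃ a, x = F a ∧ ¬ mem x a

variable {mem F}

theorem not_exists_mem_iff_of_isProductive {A : V → Prop} (hA : IsProductive mem F A) :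
    ¬ ∃ r : V, ∀ x, mem x r ↔ A x := by
  rintro ⟨r, hr⟩
  obtain ⟨hFr, hnot⟩ := hA r fun y hy => (hr y).mp hy
  exact hnot ((hr (F r)).mpr hFr)

theorem IsProductive.of_le {A B : V → Prop} (hB : IsProductive mem F B) (hAB : A ≤ B)
    (hA : ∀ s, (∀ y, mem y s → A y) → A (F s)) : IsProductive mem F A :=
  fun s hs => ⟨hA s hs, (hB s fun y hy => hAB y (hs y hy)).2⟩

theorem leastFixedPoint_apply {s : V} (hs : ∀ y, mem y s → LeastFixedPoint mem F y) :
    LeastFixedPoint mem F (F s) :=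
  fun C hC => hC s fun y hy => hs y hy C hC

theorem leastFixedPoint_le {C : V → Prop} (hC : ∀ s, (∀ y, mem y s → C y) → C (F s)) :
    LeastFixedPoint mem F ≤ C :=
  fun _ hx => hx C hC

theorem isProductive_diagonal (hF : Function.Injective F) :
    IsProductive mem F (diagonal mem F) := by
  intro s hs
  have hnot : ¬ mem (F s) s := fun hmem => by
    obtain ⟨a, ha, hna⟩ := hs (F s) hmem
    exact hna (hF ha ▸ hmem)
  exact ⟨⟨s, rfl, hnot⟩, hnot⟩

theorem isProductive_leastFixedPoint (hF : Function.Injective F) :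
    IsProductive mem F (LeastFixedPoint mem F) :=
  (isProductive_diagonal hF).of_le
    (leastFixedPoint_le fun s hs => ((isProductive_diagonal hF) s hs).1)
    fun _ => leastFixedPoint_apply

end Productive

theorem lfp_of_injective_proper {V : Type*} (mem : V → V → Prop)
    (F : V → V) (hF : Function.Injective F) :
    ¬ ∃ r : V, ∀ x, mem x r ↔
      (∀ C : V → Prop, (∀ s, (∀ y, mem y s → C y) → C (F s)) → C x) :=
  Productive.not_exists_mem_iff_of_isProductive (Productive.isProductive_leastFixedPoint hF)
end
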